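/- Let q be an odd squarefree positive integer, α an integer, and K an integer with 0 ≤ K < q. Then Σ_{k=0}^{K} e((k² + αk)/q) ≠ 0. -/

import Mathlib

/-!
More generally, `∑ k ∈ E, e (g k / m)` is nonzero for every squarefree `m`, every
nonempty finite `E` and every integer-valued `g` that misses some residue modulo each prime
`p ∣ m`; for `g k = k² + αk` and odd `p` this holds because `z ↦ z² + αz` identifies `z` and
`-α - z`, so it is not injective on `ZMod p`.

The proof is by induction on `m = p m'`. Bézout (`y p + x m' = 1`) splits
`e (g / m) = e (x g / p) e (y g / m')`, and grouping by `x g mod p` turns the vanishing of the sum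
into a relation `∑ r, ζₚ ^ r * B r = 0` with every `B r` in `ℚ(ζ_{m'})`. Since
`φ (p m') = (p - 1) φ (m')`, the cyclotomic polynomial `1 + X + ⋯ + X ^ (p - 1)` stays the minimal
polynomial of `ζₚ` over `ℚ(ζ_{m'})`, which forces all `B r` to be equal. The fibre over a missed
residue is empty, so all `B r` vanish; but a nonempty fibre is a sum of the same shape modulo `m'`,
nonzero by induction.
-/

noncomputable def e (x : ℝ) : ℂ := Complex.exp (2 * Real.pi * Complex.I * x)

open Polynomial IntermediateField Function

lemma e_add (x y : ℝ) : e (x + y) = e x * e y := by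
  rw [e, e, e, ← Complex.exp_add]; push_cast; ring_nf

lemma e_intCast_mul (a : ℤ) (x : ℝ) : e (a * x) = e x ^ a := by
  rw [e, e, ← Complex.exp_int_mul]; push_cast; ring_nf

lemma e_intCast (a : ℤ) : e a = 1 := by
  simpa [e] using e_intCast_mul a 1

lemma isPrimitiveRoot_e_one_div {n : ℕ} (hn : n ≠ 0) : IsPrimitiveRoot (e (1 / n)) n := by
  convert Complex.isPrimitiveRoot_exp n hn using 2
  push_cast [e]
  rw [mul_one_div]

lemma e_intCast_div {n : ℕ} (hn : n ≠ 0) (a : ℤ) : e (a / n) = e (1 / n) ^ (a : ZMod n).val := by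
  have : NeZero n := ⟨hn⟩
  have hsplit : (a : ℝ) / n = (((a : ZMod n).val : ℤ) : ℝ) * (1 / n) + (a / n : ℤ) := by
    have := Int.emod_add_mul_ediv a n
    rw [← ZMod.val_intCast] at this
    field_simp
    exact_mod_cast this.symm
  rw [hsplit, e_add, e_intCast, mul_one, e_intCast_mul, zpow_natCast]

lemma e_intCast_div_mul {p m : ℕ} (hp : p ≠ 0) (hm : m ≠ 0) {x y : ℤ} (hxy : y * p + x * m = 1)
    (a : ℤ) : e (a / (p * m : ℕ)) = e ((x * a : ℤ) / p) * e ((y * a : ℤ) / m) := by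
  have hxy' : (y : ℝ) * p + x * m = 1 := by exact_mod_cast hxy
  rw [← e_add]
  congr 1
  push_cast
  field_simp
  linear_combination (-(a : ℝ)) * hxy'

lemma not_surjective_intCast_mul {ι : Type*} {n : ℕ} {g : ι → ℤ} {c : ℤ} (hc : IsUnit (c : ZMod n))
    (hg : ¬Surjective fun k => (g k : ZMod n)) : ¬Surjective fun k => ((c * g k : ℤ) : ZMod n) := by
  intro h
  refine hg fun r => ?_
  obtain ⟨k, hk⟩ := h (c * r)
  exact ⟨k, hc.mul_left_cancel (by simpa using hk)⟩

lemma not_surjective_sq_add_mul {F : Type*} [Field F] [Finite F] (h2 : (2 : F) ≠ 0) (a : F) :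
    ¬Surjective fun z : F => z ^ 2 + a * z := by
  rw [← Finite.injective_iff_surjective]
  intro h
  have h0 := @h 0 (-a) (by ring)
  have h1 := @h 1 (-a - 1) (by ring)
  exact h2 (by linear_combination h1 - h0)

theorem eq_of_sum_algebraMap_mul_pow_val_eq_zero {K L : Type*} [Field K] [Field L] [Algebra K L]
    {p : ℕ} [Fact p.Prime] {ζ : L} (hζ : minpoly K ζ = cyclotomic p K) {c : ZMod p → K}
    (h : ∑ r, algebraMap K L (c r) * ζ ^ r.val = 0) (r s : ZMod p) : c r = c s := by
  set P : K[X] := ∑ r, C (c r) * X ^ r.val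
  have hcoeff (t : ZMod p) : P.coeff t.val = c t := by
    simp [P, finsetSum_coeff, (ZMod.val_injective p).eq_iff]
  have hdvd : cyclotomic p K ∣ P := hζ ▸ minpoly.dvd K ζ (by simpa [P] using h)
  have hdeg : P.natDegree ≤ (cyclotomic p K).natDegree := by
    rw [natDegree_cyclotomic, Nat.totient_prime Fact.out]
    exact natDegree_sum_le_of_forall_le _ _ fun t _ =>
      (natDegree_C_mul_X_pow_le _ _).trans (Nat.le_sub_one_of_lt t.val_lt)
  have hP := eq_leadingCoeff_mul_of_monic_of_dvd_of_natDegree_le (cyclotomic.monic p K) hdvd hdeg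
  have hc (t : ZMod p) : c t = P.leadingCoeff := by
    rw [← hcoeff]
    nth_rewrite 1 [hP]
    rw [coeff_C_mul, cyclotomic_prime, finsetSum_coeff]
    simp [coeff_X_pow, t.val_lt]
  rw [hc r, hc s]

theorem finrank_adjoin_isPrimitiveRoot {L : Type*} [Field L] [CharZero L] {n : ℕ} (hn : 0 < n)
    {ζ : L} (hζ : IsPrimitiveRoot ζ n) : Module.finrank ℚ ℚ⟮ζ⟯ = n.totient := by
  rw [adjoin.finrank (hζ.isIntegral hn).tower_top, ← cyclotomic_eq_minpoly_rat hζ hn,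
    natDegree_cyclotomic]

theorem minpoly_adjoin_isPrimitiveRoot_eq_cyclotomic {L : Type*} [Field L] [CharZero L]
    {n m : ℕ} (hn : 0 < n) (hm : 0 < m) (hnm : n.Coprime m) {ζ ξ : L} (hζ : IsPrimitiveRoot ζ n)
    (hξ : IsPrimitiveRoot ξ m) : minpoly ℚ⟮ξ⟯ ζ = cyclotomic n ℚ⟮ξ⟯ := by
  set K := ℚ⟮ξ⟯
  have hζK : IsIntegral K ζ := (hζ.isIntegral hn).tower_top
  have hdvd : minpoly K ζ ∣ cyclotomic n K := by
    refine minpoly.dvd K ζ ?_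
    rw [aeval_def, eval₂_eq_eval_map, map_cyclotomic]
    exact hζ.isRoot_cyclotomic hn
  refine (eq_of_monic_of_dvd_of_natDegree_le (minpoly.monic hζK) (cyclotomic.monic n K) hdvd
    ?_).symm
  have hζξ : IsPrimitiveRoot (ζ * ξ) (n * m) := by
    rw [IsPrimitiveRoot.iff_orderOf, (Commute.all ζ ξ).orderOf_mul_eq_mul_orderOf_of_coprime
      (by rwa [← hζ.eq_orderOf, ← hξ.eq_orderOf]), ← hζ.eq_orderOf, ← hξ.eq_orderOf]
  have hle : ℚ⟮ζ * ξ⟯ ≤ K⟮ζ⟯.restrictScalars ℚ :=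
    adjoin_simple_le_iff.2 (mul_mem (mem_adjoin_simple_self K ζ)
      (K⟮ζ⟯.algebraMap_mem ⟨ξ, mem_adjoin_simple_self ℚ ξ⟩))
  have : FiniteDimensional ℚ K := adjoin.finiteDimensional (hξ.isIntegral hm).tower_top
  have : FiniteDimensional K K⟮ζ⟯ := adjoin.finiteDimensional hζK
  have hfin : FiniteDimensional ℚ K⟮ζ⟯ := Module.Finite.trans K K⟮ζ⟯
  have : FiniteDimensional ℚ (K⟮ζ⟯.restrictScalars ℚ) := hfin
  have hfinrank := Module.finrank_mul_finrank ℚ K K⟮ζ⟯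
  have htower := finrank_le_of_le_right hle
  change _ ≤ Module.finrank ℚ K⟮ζ⟯ at htower
  rw [finrank_adjoin_isPrimitiveRoot (Nat.mul_pos hn hm) hζξ, Nat.totient_mul hnm, ← hfinrank,
    finrank_adjoin_isPrimitiveRoot hm hξ, adjoin.finrank hζK, mul_comm] at htower
  rw [natDegree_cyclotomic]
  exact Nat.le_of_mul_le_mul_left htower (Nat.totient_pos.2 hm)

theorem eq_of_sum_e_one_div_pow_val_mul_eq_zero {p m : ℕ} [hp : Fact p.Prime] (hm : 0 < m)
    (hpm : p.Coprime m) {B : ZMod p → ℂ} (hB : ∀ r, B r ∈ ℚ⟮e (1 / m)⟯)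
    (h : ∑ r, e (1 / p) ^ r.val * B r = 0) (r s : ZMod p) : B r = B s := by
  have hmin := minpoly_adjoin_isPrimitiveRoot_eq_cyclotomic hp.out.pos hm hpm
    (isPrimitiveRoot_e_one_div hp.out.ne_zero) (isPrimitiveRoot_e_one_div hm.ne')
  simpa using congrArg Subtype.val
    (eq_of_sum_algebraMap_mul_pow_val_eq_zero hmin (c := fun r => ⟨B r, hB r⟩)
      (by simpa [mul_comm] using h) r s)

lemma sum_e_intCast_div_mul_eq_sum_fiberwise {ι : Type*} {p m : ℕ} [NeZero p] (hm : m ≠ 0)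
    {x y : ℤ} (hxy : y * p + x * m = 1) (g : ι → ℤ) (E : Finset ι) :
    ∑ k ∈ E, e (g k / (p * m : ℕ)) = ∑ r : ZMod p,
      e (1 / p) ^ r.val * ∑ k ∈ E with ((x * g k : ℤ) : ZMod p) = r, e ((y * g k : ℤ) / m) := by
  rw [← Finset.sum_fiberwise E (fun k => ((x * g k : ℤ) : ZMod p))]
  refine Finset.sum_congr rfl fun r _ => ?_
  rw [Finset.mul_sum]
  refine Finset.sum_congr rfl fun k hk => ?_
  rw [e_intCast_div_mul (NeZero.ne p) hm hxy, e_intCast_div (NeZero.ne p),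
    (Finset.mem_filter.1 hk).2]

theorem sum_e_intCast_div_ne_zero {ι : Type*} {m : ℕ} (hm : Squarefree m) (g : ι → ℤ)
    (hg : ∀ p, p.Prime → p ∣ m → ¬Surjective fun k => (g k : ZMod p)) {E : Finset ι}
    (hE : E.Nonempty) : ∑ k ∈ E, e (g k / m) ≠ 0 := by
  induction m using Nat.strong_induction_on generalizing g E with
  | _ m ih =>
  obtain rfl | hm1 := eq_or_ne m 1
  · simpa [e_intCast] using hE.ne_empty
  obtain ⟨p, hp, m', rfl⟩ : ∃ p, p.Prime ∧ ∃ m', m = p * m' :=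
    ⟨m.minFac, Nat.minFac_prime hm1, _, (Nat.mul_div_cancel' m.minFac_dvd).symm⟩
  have := Fact.mk hp
  obtain ⟨hpm', -, hm'⟩ := Nat.squarefree_mul_iff.1 hm
  obtain ⟨y, x, hxy⟩ := Nat.isCoprime_iff_coprime.2 hpm'
  have hx : IsUnit (x : ZMod p) :=
    (ZMod.coe_int_isUnit_iff_isCoprime x p).2 ⟨y, m', by linear_combination hxy⟩
  have hy (l : ℕ) (hl : l ∣ m') : IsUnit (y : ZMod l) :=
    (ZMod.coe_int_isUnit_iff_isCoprime y l).2 (IsCoprime.of_isCoprime_of_dvd_left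
      ⟨x, p, by linear_combination hxy⟩ (Int.natCast_dvd_natCast.2 hl))
  set B : ZMod p → ℂ := fun r =>
    ∑ k ∈ E with ((x * g k : ℤ) : ZMod p) = r, e ((y * g k : ℤ) / m')
  intro hsum
  rw [sum_e_intCast_div_mul_eq_sum_fiberwise hm'.ne_zero hxy] at hsum
  have hB : ∀ r s, B r = B s := eq_of_sum_e_one_div_pow_val_mul_eq_zero
    (Nat.pos_of_ne_zero hm'.ne_zero) hpm'
    (fun r => sum_mem fun k _ => by
      rw [e_intCast_div hm'.ne_zero]; exact pow_mem (mem_adjoin_simple_self ℚ _) _) hsum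
  obtain ⟨r₀, hr₀⟩ := not_forall.1 (not_surjective_intCast_mul hx (hg p hp (dvd_mul_right p m')))
  obtain ⟨k₀, hk₀⟩ := hE
  have hfiber : B (x * g k₀ : ℤ) = 0 := by
    rw [hB _ r₀]
    exact Finset.sum_eq_zero fun k hk => absurd (Finset.mem_filter.1 hk).2 (not_exists.1 hr₀ k)
  have hfiber_nonempty : {k ∈ E | ((x * g k : ℤ) : ZMod p) = (x * g k₀ : ℤ)}.Nonempty :=
    ⟨k₀, Finset.mem_filter.2 ⟨hk₀, rfl⟩⟩
  exact ih m' (lt_mul_left (Nat.pos_of_ne_zero hm'.ne_zero) hp.one_lt) hm' (fun k => y * g k)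
    (fun l hl hlm => not_surjective_intCast_mul (hy l hlm) (hg l hl (dvd_mul_of_dvd_right hlm p)))
    hfiber_nonempty hfiber

theorem stmt18_general (q : ℕ) (hodd : Odd q) (hsf : Squarefree q) (α : ℤ) (K : ℕ) :
    ∑ k ∈ Finset.range (K + 1), e ((((k : ℤ) ^ 2 + α * k : ℤ) : ℝ) / q) ≠ 0 := by
  refine sum_e_intCast_div_ne_zero hsf (fun k : ℕ => (k : ℤ) ^ 2 + α * k) (fun p hp hpq => ?_)
    Finset.nonempty_range_add_one
  have := Fact.mk hp
  have h2 : (2 : ZMod p) ≠ 0 := Ring.two_ne_zero (by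
    rw [ZMod.ringChar_zmod_n]
    rintro rfl
    exact Nat.not_even_iff_odd.2 (hodd.of_dvd_nat hpq) even_two)
  intro hsurj
  exact not_surjective_sq_add_mul h2 (α : ZMod p) (Surjective.of_comp (g := Nat.cast)
    (by simpa [Function.comp_def] using hsurj))

theorem stmt18 (q : ℕ) (hq : 0 < q) (hodd : Odd q) (hsf : Squarefree q) (α : ℤ)
    (K : ℕ) (hK : K < q) :
    ∑ k ∈ Finset.range (K + 1), e ((((k : ℤ) ^ 2 + α * k : ℤ) : ℝ) / q) ≠ 0 :=
  stmt18_general q hodd hsf α K
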